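/- For a backward submartingale (X_n, E_n) with F = E_∞ and inf_n F(X_n) = Y existing in E, the bound F(|X_n|) ≤ −Y + 2F(X_1⁺) holds for all n, and consequently λ F(P_{(|X_n| > λe)} e) ≤ −Y + 2F(X_1⁺), so that p_φ(P_{(|X_n| > λe)} e) → 0 uniformly in n as λ → ∞ for every φ. -/
import Mathlib


variable {E : Type*} [AddCommGroup E] [Lattice E]
  [CovariantClass E E (· + ·) (· ≤ ·)] [Module ℝ E]

/-- `E` is Dedekind complete. -/
def DedekindComplete (E : Type*) [AddCommGroup E] [Lattice E] : Prop :=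
  ∀ A : Set E, A.Nonempty → BddAbove A → ∃ s, IsLUB A s

/-- `e` is a weak order unit. -/
def IsWeakUnit (e : E) : Prop :=
  0 < e ∧ ∀ x : E, 0 ≤ x → IsLUB (Set.range fun n : ℕ => x ⊓ n • e) x

/-- A conditional expectation with respect to the weak order unit `e`. -/
def IsCondExp (e : E) (F : E →ₗ[ℝ] E) : Prop :=
  (∀ x, F (F x) = F x) ∧ (∀ x : E, 0 < x → 0 < F x) ∧ F e = e ∧
  ∀ V : ℕ → E, Antitone V → IsGLB (Set.range V) 0 →
    IsGLB (Set.range fun n => F (V n)) 0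

/-- `(X, En)` is a backward submartingale: the conditional expectations `En` are
decreasing (`En n (En m x) = En m (En n x) = En m x` for `n ≤ m`), each `X n`
lies in the range of `En n`, and `En (n+1) (X n) ≥ X (n+1)`. -/
def IsBackwardSubmartingale (e : E) (En : ℕ → (E →ₗ[ℝ] E)) (X : ℕ → E) : Prop :=
  (∀ n, IsCondExp e (En n)) ∧
  (∀ n m : ℕ, n ≤ m → ∀ x : E, En n (En m x) = En m x ∧ En m (En n x) = En m x) ∧
  (∀ n, En n (X n) = X n) ∧
  (∀ n, X (n + 1) ≤ En (n + 1) (X n))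

/-- A band (order) projection. -/
def IsBandProj (P : E →ₗ[ℝ] E) : Prop :=
  (∀ x, P (P x) = P x) ∧ ∀ x : E, 0 ≤ x → 0 ≤ P x ∧ P x ≤ x

/-- `P` is the band projection onto the band generated by `u ≥ 0`. -/
def IsProjOnBandGen (P : E →ₗ[ℝ] E) (u : E) : Prop :=
  IsBandProj P ∧ ∀ x : E, 0 ≤ x → IsLUB (Set.range fun n : ℕ => x ⊓ n • u) (P x)

/-- A positive, normalized, order continuous functional. -/
def IsNormedFunctional (e : E) (φ : E →ₗ[ℝ] ℝ) : Prop :=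
  (∀ x : E, 0 ≤ x → 0 ≤ φ x) ∧ φ e = 1 ∧
  ∀ V : ℕ → E, Antitone V → IsGLB (Set.range V) 0 →
    Filter.Tendsto (fun n => φ (V n)) Filter.atTop (nhds 0)

/-- `Φ` is a separating family of normalized positive order continuous functionals. -/
def IsSeparatingFamily (e : E) (Φ : Set (E →ₗ[ℝ] ℝ)) : Prop :=
  (∀ φ ∈ Φ, IsNormedFunctional e φ) ∧ ∀ x : E, (∀ φ ∈ Φ, φ x = 0) → x = 0

/-- `L¹`-uniform integrability. -/
def UnifInt (F : E →ₗ[ℝ] E) (Φ : Set (E →ₗ[ℝ] ℝ)) (X : ℕ → E)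
    (P : ℕ → ℝ → (E →ₗ[ℝ] E)) : Prop :=
  ∀ φ ∈ Φ, ∀ ε : ℝ, 0 < ε → ∃ l₀ : ℝ, ∀ l : ℝ, l₀ ≤ l → ∀ n : ℕ,
    φ (F (P n l |X n|)) < ε

section Aux

private lemma aux_mono (T : E →ₗ[ℝ] E) (h : ∀ x : E, 0 ≤ x → 0 ≤ T x) :
    ∀ x y : E, x ≤ y → T x ≤ T y := by
  intro x y hxy
  have := h (y - x) (by simpa using hxy)
  rw [map_sub] at this
  exact sub_nonneg.mp this

private lemma aux_pos (T : E →ₗ[ℝ] E) (h : ∀ x : E, 0 < x → 0 < T x) :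
    ∀ x : E, 0 ≤ x → 0 ≤ T x := by
  intro x hx
  rcases hx.eq_or_lt with h0 | h0
  · simp [← h0]
  · exact (h x h0).le

private lemma aux_inf_add_le (x y z : E) (hx : 0 ≤ x) (hy : 0 ≤ y) (hz : 0 ≤ z) :
    x ⊓ (y + z) ≤ x ⊓ y + x ⊓ z := by
  have hdistr : x ⊓ y + x ⊓ z = ((x + x) ⊓ (y + x)) ⊓ ((x + z) ⊓ (y + z)) := by
    rw [add_inf x z (x ⊓ y), inf_add x y x, inf_add x y z]
  rw [hdistr]
  refine le_inf (le_inf ?_ ?_) (le_inf ?_ ?_)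
  · exact inf_le_left.trans (le_add_of_nonneg_right hx)
  · exact inf_le_left.trans (le_add_of_nonneg_left hy)
  · exact inf_le_left.trans (le_add_of_nonneg_right hz)
  · exact inf_le_right

private lemma aux_nsmul_nonneg (x : E) (hx : 0 ≤ x) : ∀ k : ℕ, 0 ≤ k • x := by
  intro k
  induction k with
  | zero => simp
  | succ k ih => rw [succ_nsmul]; exact add_nonneg ih hx

end Aux

/-- For a backward submartingale with `inf_n F(X n) = Y` in `E`:
`F |X n| ≤ -Y + 2 F(X 1⁺)`, the Chebyshev consequence
`l • F(P_{(|X n| > l e)} e) ≤ -Y + 2 F(X 1⁺)`, and hence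
`p_φ(P_{(|X n| > l e)} e) → 0` uniformly in `n` as `l → ∞`. -/
theorem backwardSubmartingale_abs_bound
    (hE : DedekindComplete E) (e : E) (he : IsWeakUnit e)
    (En : ℕ → (E →ₗ[ℝ] E)) (X : ℕ → E)
    (hX : IsBackwardSubmartingale e En X)
    (F : E →ₗ[ℝ] E) (hF : IsCondExp e F)
    (hFEn : ∀ n, ∀ x : E, F (En n x) = F x ∧ En n (F x) = F x)
    (Φ : Set (E →ₗ[ℝ] ℝ)) (hΦ : IsSeparatingFamily e Φ)
    (Y : E) (hY : IsGLB (Set.range fun n => F (X n)) Y)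
    (P : ℕ → ℝ → (E →ₗ[ℝ] E))
    (hP : ∀ n (l : ℝ), IsProjOnBandGen (P n l) ((|X n| - l • e) ⊔ 0)) :
    (∀ n, F |X n| ≤ -Y + (2 : ℝ) • F ((X 0) ⊔ 0)) ∧
    (∀ n (l : ℝ), 0 < l → l • F (P n l e) ≤ -Y + (2 : ℝ) • F ((X 0) ⊔ 0)) ∧
    (∀ φ ∈ Φ, ∀ ε : ℝ, 0 < ε → ∃ l₀ : ℝ, ∀ l : ℝ, l₀ ≤ l → ∀ n,
      φ (F (P n l e)) < ε) := by
  obtain ⟨hEn, hEnm, hXr, hsub⟩ := hX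
  have hFpos : ∀ x : E, 0 ≤ x → 0 ≤ F x := aux_pos F hF.2.1
  have hFmono := aux_mono F hFpos
  have hEnpos : ∀ n, ∀ x : E, 0 ≤ x → 0 ≤ En n x := fun n => aux_pos (En n) (hEn n).2.1
  have hEnmono : ∀ n, ∀ x y : E, x ≤ y → En n x ≤ En n y :=
    fun n => aux_mono (En n) (hEnpos n)
  -- the positive parts form a backward submartingale
  have key : ∀ n, F (X n ⊔ 0) ≤ F (X 0 ⊔ 0) := by
    intro n
    induction n with
    | zero => exact le_rfl
    | succ n ih =>
      have h0 : (0 : E) ≤ En (n + 1) (X n ⊔ 0) := hEnpos (n + 1) _ le_sup_right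
      have h1 : X (n + 1) ⊔ 0 ≤ En (n + 1) (X n ⊔ 0) :=
        sup_le ((hsub n).trans (hEnmono (n + 1) _ _ le_sup_left)) h0
      calc F (X (n + 1) ⊔ 0) ≤ F (En (n + 1) (X n ⊔ 0)) := hFmono _ _ h1
        _ = F (X n ⊔ 0) := (hFEn (n + 1) _).1
        _ ≤ F (X 0 ⊔ 0) := ih
  -- part 1
  have part1 : ∀ n, F |X n| ≤ -Y + (2 : ℝ) • F ((X 0) ⊔ 0) := by
    intro n
    have habs : |X n| = (X n ⊔ 0) + (X n ⊔ 0) - X n := by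
      have h1 := posPart_add_negPart (X n)
      have h2 := posPart_sub_negPart (X n)
      set a := (X n)⁺ with ha
      set b := (X n)⁻ with hb
      have hpa : X n ⊔ 0 = a := (posPart_def (X n)).symm
      rw [hpa, ← h1, ← h2]
      abel
    have hy : Y ≤ F (X n) := hY.1 ⟨n, rfl⟩
    have hk := key n
    rw [habs, map_sub, map_add, two_smul]
    calc F (X n ⊔ 0) + F (X n ⊔ 0) - F (X n)
        ≤ F (X 0 ⊔ 0) + F (X 0 ⊔ 0) - F (X n) :=
          sub_le_sub_right (add_le_add hk hk) _
      _ ≤ F (X 0 ⊔ 0) + F (X 0 ⊔ 0) - Y := sub_le_sub_left hy _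
      _ = -Y + (F (X 0 ⊔ 0) + F (X 0 ⊔ 0)) := by abel
  -- Chebyshev
  have part2 : ∀ n (l : ℝ), l • F (P n l e) ≤ -Y + (2 : ℝ) • F ((X 0) ⊔ 0) := by
    intro n l
    obtain ⟨⟨Pidem, Ppos⟩, Plub⟩ := hP n l
    have Pmono := aux_mono (P n l) (fun x hx => (Ppos x hx).1)
    set u : E := (|X n| - l • e) ⊔ 0 with hu
    set u' : E := (l • e - |X n|) ⊔ 0 with hu'
    have hu0 : (0 : E) ≤ u := le_sup_right
    have hu'0 : (0 : E) ≤ u' := le_sup_right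
    have hdisj : u' ⊓ u = 0 := by
      have h := posPart_inf_negPart_eq_zero (|X n| - l • e)
      have h1 : (|X n| - l • e)⁺ = u := rfl
      have h2 : (|X n| - l • e)⁻ = u' := by
        show -(|X n| - l • e) ⊔ 0 = u'
        rw [neg_sub]
      rw [h1, h2, inf_comm] at h
      exact h
    have hk0 : ∀ k : ℕ, u' ⊓ k • u = 0 := by
      intro k
      induction k with
      | zero => simpa using inf_eq_right.mpr hu'0
      | succ k ih =>
        refine le_antisymm ?_ (le_inf hu'0 (aux_nsmul_nonneg u hu0 (k + 1)))
        have h1 : u' ⊓ ((k + 1) • u) ≤ u' ⊓ (k • u) + u' ⊓ u := by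
          rw [succ_nsmul]
          exact aux_inf_add_le u' (k • u) u hu'0 (aux_nsmul_nonneg u hu0 k) hu0
        simpa [ih, hdisj] using h1
    have hPu' : P n l u' = 0 := by
      have h1 := Plub u' hu'0
      have h2 : IsLUB (Set.range fun k : ℕ => u' ⊓ k • u) 0 := by
        have : (fun k : ℕ => u' ⊓ k • u) = fun _ : ℕ => (0 : E) := funext hk0
        rw [this, Set.range_const]
        exact isLUB_singleton
      exact h1.unique h2
    have h3 : l • e - |X n| ≤ u' := le_sup_left
    have h4 : P n l (l • e - |X n|) ≤ 0 := hPu' ▸ Pmono _ _ h3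
    rw [map_sub] at h4
    have h5 : P n l (l • e) ≤ P n l |X n| := sub_nonpos.mp h4
    have h6 : P n l |X n| ≤ |X n| := (Ppos _ (abs_nonneg _)).2
    calc l • F (P n l e) = F (P n l (l • e)) := by rw [map_smul, map_smul]
      _ ≤ F |X n| := hFmono _ _ (h5.trans h6)
      _ ≤ -Y + (2 : ℝ) • F ((X 0) ⊔ 0) := part1 n
  refine ⟨part1, fun n l _ => part2 n l, ?_⟩
  -- uniform smallness
  intro φ hφ ε hε
  obtain ⟨hφpos, hφe, hφcont⟩ := hΦ.1 φ hφ
  set C : ℝ := φ (-Y + (2 : ℝ) • F ((X 0) ⊔ 0)) with hC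
  refine ⟨max 1 ((C + 1) / ε), fun l hl n => ?_⟩
  have hl1 : (1 : ℝ) ≤ l := le_trans (le_max_left _ _) hl
  have hl0 : 0 < l := lt_of_lt_of_le one_pos hl1
  have hφmono : ∀ x y : E, x ≤ y → φ x ≤ φ y := by
    intro x y hxy
    have := hφpos (y - x) (by simpa using hxy)
    rw [map_sub] at this
    linarith
  have hbound : l * φ (F (P n l e)) ≤ C := by
    have := hφmono _ _ (part2 n l)
    rwa [map_smul, smul_eq_mul] at this
  have hnn : 0 ≤ φ (F (P n l e)) :=
    hφpos _ (hFpos _ ((hP n l).1.2 e (he.1.le)).1)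
  by_contra hcon
  push_neg at hcon
  have hεl : C + 1 ≤ ε * l := by
    have h := le_trans (le_max_right 1 ((C + 1) / ε)) hl
    rw [div_le_iff₀ hε] at h
    linarith
  have : ε * l ≤ φ (F (P n l e)) * l :=
    mul_le_mul_of_nonneg_right hcon hl0.le
  linarith [hbound, this, hεl]
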